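/- Let a, b, x be complex numbers with b not a nonpositive integer. Then (x·d/dx + b − a − x) ₁F₁(a;b;x) = (b−a) ₁F₁(a−1;b;x), i.e. x times the derivative of ₁F₁(a;b;·) at x plus (b − a − x)·₁F₁(a;b;x) equals (b−a)·₁F₁(a−1;b;x). -/

import Mathlib

open Complex

/-- Pochhammer symbol `(q)_n = q (q+1) ⋯ (q+n-1)`. -/
noncomputable def poch (q : ℂ) (n : ℕ) : ℂ := (ascPochhammer ℂ n).eval q

/-- Confluent hypergeometric function `₁F₁(a; b; x) = ∑ₛ (a)ₛ xˢ / (s! (b)ₛ)`. -/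
noncomputable def oneF1 (a b x : ℂ) : ℂ :=
  ∑' s : ℕ, poch a s * x ^ s / ((s.factorial : ℂ) * poch b s)

open Filter

noncomputable def cc (a b : ℂ) (n : ℕ) : ℂ := poch a n / ((n.factorial : ℂ) * poch b n)

lemma poch_succ (q : ℂ) (n : ℕ) : poch q (n + 1) = poch q n * (q + n) := by
  simp [poch, ascPochhammer_succ_eval]

lemma poch_succ_left (q : ℂ) (n : ℕ) : poch (q - 1) (n + 1) = (q - 1) * poch q n := by
  simp [poch, ascPochhammer_succ_left, Polynomial.eval_comp]

lemma poch_ne_zero {b : ℂ} (hb : ∀ n : ℕ, b ≠ -(n : ℂ)) (n : ℕ) : poch b n ≠ 0 := by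
  induction n with
  | zero => simp [poch]
  | succ n ih =>
    rw [poch_succ]
    refine mul_ne_zero ih ?_
    intro h
    exact hb n (by linear_combination h)

lemma cc_succ (a b : ℂ) (n : ℕ) :
    cc a b (n + 1) = cc a b n * ((a + n) / (((n : ℂ) + 1) * (b + n))) := by
  simp only [cc, poch_succ, Nat.factorial_succ, Nat.cast_mul, Nat.cast_add, Nat.cast_one]
  rw [div_mul_div_comm]
  congr 1
  ring

lemma key (a b : ℂ) (hb : ∀ n : ℕ, b ≠ -(n : ℂ)) (n : ℕ) :
    ((n : ℂ) + 1 + b - a) * cc a b (n + 1) - (b - a) * cc (a - 1) b (n + 1) = cc a b n := by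
  have hbn : b + (n : ℂ) ≠ 0 := fun h => hb n (by linear_combination h)
  have hpb : poch b n ≠ 0 := poch_ne_zero hb n
  have hfac : ((n.factorial : ℂ)) ≠ 0 := Nat.cast_ne_zero.2 n.factorial_ne_zero
  have hn1 : ((n : ℂ) + 1) ≠ 0 := by
    have h := Nat.cast_ne_zero (R := ℂ).2 (Nat.succ_ne_zero n)
    push_cast at h; exact h
  simp only [cc]
  rw [poch_succ_left]
  simp only [poch_succ, Nat.factorial_succ, Nat.cast_mul, Nat.cast_add, Nat.cast_one]
  field_simp
  ring

lemma summable_aux (a b : ℂ) (R : ℝ) (hR : 0 < R) :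
    Summable (fun n : ℕ => ‖cc a b n‖ * (n + 1) * R ^ n) := by
  refine summable_of_ratio_norm_eventually_le (r := 1/2) (by norm_num) ?_
  filter_upwards [eventually_ge_atTop (⌈max ‖a‖ (‖b‖ + 8 * R)⌉₊ + 1)] with n hn
  have hn' : (⌈max ‖a‖ (‖b‖ + 8 * R)⌉₊ : ℝ) ≤ n := by exact_mod_cast le_trans (Nat.le_succ _) hn
  have hmax : max ‖a‖ (‖b‖ + 8 * R) ≤ n := le_trans (Nat.le_ceil _) hn'
  have ha : ‖a‖ ≤ n := le_trans (le_max_left _ _) hmax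
  have hbn : ‖b‖ + 8 * R ≤ n := le_trans (le_max_right _ _) hmax
  have e1 : ‖((n : ℂ) + 1)‖ = (n : ℝ) + 1 := by
    rw [show ((n : ℂ) + 1) = ((n + 1 : ℕ) : ℂ) by push_cast; ring, Complex.norm_natCast]
    push_cast; ring
  have en : ‖((n : ℂ))‖ = (n : ℝ) := Complex.norm_natCast n
  have h1 : ‖cc a b (n + 1)‖ = ‖cc a b n‖ * (‖a + n‖ / (((n : ℝ) + 1) * ‖b + n‖)) := by
    rw [cc_succ, norm_mul, norm_div, norm_mul, e1]
  set C := ‖cc a b n‖ with hC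
  set A := ‖a + (n : ℂ)‖ with hA
  set P := ‖b + (n : ℂ)‖ with hP
  have hA1 : A ≤ ‖a‖ + n := by rw [hA, ← en]; exact norm_add_le _ _
  have hP1 : (n : ℝ) - ‖b‖ ≤ P := by
    rw [hP]
    have h2 : ‖((n:ℂ))‖ ≤ ‖b + (n:ℂ)‖ + ‖b‖ := by
      have h3 := norm_add_le (b + (n:ℂ)) (-b)
      simpa using h3
    rw [en] at h2
    linarith
  have hP0 : 0 < P := lt_of_lt_of_le (by nlinarith) hP1
  have hn1 : (0:ℝ) < (n : ℝ) + 1 := by positivity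
  have hRn : (0:ℝ) < R ^ n := by positivity
  have h8 : 8 * R ≤ P := by linarith
  have hA2 : A ≤ 2 * (n : ℝ) := by linarith
  have hkey : A * ((n : ℝ) + 2) * R ≤ 1/2 * ((n:ℝ) + 1)^2 * P := by
    calc A * ((n : ℝ) + 2) * R ≤ (2 * (n:ℝ)) * ((n : ℝ) + 2) * R := by
          have : (0:ℝ) ≤ (n:ℝ) + 2 := by positivity
          gcongr
      _ ≤ 1/2 * ((n:ℝ) + 1)^2 * P := by
          nlinarith [mul_nonneg hR.le (sq_nonneg ((n:ℝ))), hR.le,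
            mul_nonneg (sq_nonneg ((n:ℝ)+1)) (show (0:ℝ) ≤ P - 8*R by linarith),
            mul_nonneg hR.le (Nat.cast_nonneg (α := ℝ) n)]
  have goal2 : C * (A / (((n:ℝ)+1) * P)) * ((n : ℝ) + 2) * (R ^ n * R)
      ≤ 1/2 * (C * ((n:ℝ)+1) * R ^ n) := by
    have hCRn : (0:ℝ) ≤ C * R ^ n := by positivity
    calc C * (A / (((n:ℝ)+1) * P)) * ((n : ℝ) + 2) * (R ^ n * R)
        = (C * R ^ n) * (A * ((n:ℝ)+2) * R) / (((n:ℝ)+1) * P) := by ring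
      _ ≤ (C * R ^ n) * (1/2 * ((n:ℝ)+1)^2 * P) / (((n:ℝ)+1) * P) := by
          gcongr
      _ = 1/2 * (C * ((n:ℝ)+1) * R ^ n) := by field_simp
  have lhsnn : (0:ℝ) ≤ ‖cc a b (n+1)‖ * (↑(n+1) + 1) * R ^ (n+1) := by positivity
  have rhsnn : (0:ℝ) ≤ ‖cc a b n‖ * (↑n + 1) * R ^ n := by positivity
  rw [Real.norm_of_nonneg lhsnn, Real.norm_of_nonneg rhsnn, h1, pow_succ]
  push_cast
  calc C * (A / (((n:ℝ)+1) * P)) * ((n : ℝ) + 1 + 1) * (R ^ n * R)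
      = C * (A / (((n:ℝ)+1) * P)) * ((n : ℝ) + 2) * (R ^ n * R) := by ring
    _ ≤ 1/2 * (C * ((n:ℝ)+1) * R ^ n) := goal2

lemma cc_zero (a b : ℂ) : cc a b 0 = 1 := by simp [cc, poch]

theorem stmt2 (a b x : ℂ) (hb : ∀ n : ℕ, b ≠ -(n : ℂ)) :
    x * deriv (fun t => oneF1 a b t) x + (b - a - x) * oneF1 a b x = (b - a) * oneF1 (a - 1) b x := by
  set R : ℝ := ‖x‖ + 1 with hRdef
  have hR0 : 0 < R := by positivity
  have hR1 : 1 ≤ R := by rw [hRdef]; have := norm_nonneg x; linarith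
  have hxR : ‖x‖ < R := by rw [hRdef]; linarith
  set u : ℕ → ℝ := fun n => ‖cc a b n‖ * (n + 1) * R ^ n with hu_def
  have hu : Summable u := summable_aux a b R hR0
  set g : ℕ → ℂ → ℂ := fun n t => cc a b n * t ^ n with hg
  have honeF1 : ∀ (a' : ℂ) (t : ℂ), oneF1 a' b t = ∑' n, cc a' b n * t ^ n := fun a' t =>
    tsum_congr fun s => by rw [cc]; ring
  have hderiv : ∀ (n : ℕ) (y : ℂ), HasDerivAt (g n) (cc a b n * (n * y ^ (n - 1))) y :=
    fun n y => (hasDerivAt_pow n y).const_mul _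
  have hboundd : ∀ (n : ℕ) (y : ℂ), y ∈ Metric.ball (0 : ℂ) R →
      ‖cc a b n * (n * y ^ (n - 1))‖ ≤ u n := by
    intro n y hy
    have hyR : ‖y‖ ≤ R := by
      rw [Metric.mem_ball, dist_zero_right] at hy; exact hy.le
    have h : ‖y‖ ^ (n - 1) ≤ R ^ n :=
      le_trans (pow_le_pow_left₀ (norm_nonneg y) hyR _) (pow_le_pow_right₀ hR1 (Nat.sub_le n 1))
    calc ‖cc a b n * (n * y ^ (n - 1))‖ = ‖cc a b n‖ * ((n : ℝ) * ‖y‖ ^ (n - 1)) := by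
          rw [norm_mul, norm_mul, norm_pow, Complex.norm_natCast]
      _ ≤ ‖cc a b n‖ * (((n : ℝ) + 1) * R ^ n) := by
          refine mul_le_mul_of_nonneg_left ?_ (norm_nonneg _)
          exact mul_le_mul (by linarith) h (pow_nonneg (norm_nonneg y) _)
            (by linarith [Nat.cast_nonneg (α := ℝ) n])
      _ = u n := by rw [hu_def]; ring
  have hxmem : x ∈ Metric.ball (0 : ℂ) R := by
    rw [Metric.mem_ball, dist_zero_right]; exact hxR
  have hboundf : ∀ (a' : ℂ) (n : ℕ), ‖cc a' b n * x ^ n‖ ≤ ‖cc a' b n‖ * (n + 1) * R ^ n := by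
    intro a' n
    rw [norm_mul, norm_pow]
    calc ‖cc a' b n‖ * ‖x‖ ^ n ≤ ‖cc a' b n‖ * R ^ n :=
          mul_le_mul_of_nonneg_left (pow_le_pow_left₀ (norm_nonneg x) hxR.le n) (norm_nonneg _)
      _ ≤ ‖cc a' b n‖ * (n + 1) * R ^ n := by
          have h1 : (0 : ℝ) ≤ (n : ℝ) := Nat.cast_nonneg n
          have := norm_nonneg (cc a' b n)
          have hRn : (0:ℝ) ≤ R ^ n := by positivity
          nlinarith [mul_nonneg (mul_nonneg this hRn) (Nat.cast_nonneg (α := ℝ) n)]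
  have hsum : Summable (fun n => g n x) :=
    Summable.of_norm_bounded hu (hboundf a)
  have hsum' : Summable (fun n => cc (a - 1) b n * x ^ n) :=
    Summable.of_norm_bounded (summable_aux (a - 1) b R hR0) (hboundf (a - 1))
  have hD : HasDerivAt (fun t => ∑' n, g n t) (∑' n, cc a b n * ((n : ℂ) * x ^ (n - 1))) x :=
    hasDerivAt_tsum_of_isPreconnected hu Metric.isOpen_ball
      (convex_ball (0 : ℂ) R).isPreconnected (fun n y _ => hderiv n y)
      hboundd hxmem hsum hxmem
  have hfun : (fun t => oneF1 a b t) = fun t => ∑' n, g n t := funext fun t => honeF1 a t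
  have hDeriv : deriv (fun t => oneF1 a b t) x = ∑' n, cc a b n * ((n : ℂ) * x ^ (n - 1)) := by
    rw [hfun]; exact hD.deriv
  have hsumd : Summable (fun n => cc a b n * ((n : ℂ) * x ^ (n - 1))) :=
    Summable.of_norm_bounded hu fun n => hboundd n x hxmem
  have hSD : HasSum (fun n => cc a b n * ((n : ℂ) * x ^ (n - 1)))
      (deriv (fun t => oneF1 a b t) x) := by
    rw [hDeriv]; exact hsumd.hasSum
  have hS : HasSum (fun n => cc a b n * x ^ n) (oneF1 a b x) := by
    rw [honeF1]; exact hsum.hasSum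
  have hS' : HasSum (fun n => cc (a - 1) b n * x ^ n) (oneF1 (a - 1) b x) := by
    rw [honeF1]; exact hsum'.hasSum
  set D := deriv (fun t => oneF1 a b t) x with hD_def
  set Fx := oneF1 a b x
  set F'x := oneF1 (a - 1) b x
  have S1 : HasSum (fun (n : ℕ) => (n : ℂ) * cc a b n * x ^ n) (x * D) := by
    have h := hSD.mul_left x
    have heq : ∀ n : ℕ, x * (cc a b n * ((n : ℂ) * x ^ (n - 1))) = (n : ℂ) * cc a b n * x ^ n := by
      intro n
      cases n with
      | zero => simp
      | succ m => push_cast; ring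
    simpa only [heq] using h
  have A : HasSum (fun (n : ℕ) => (n : ℂ) * cc a b n * x ^ n + (b - a) * (cc a b n * x ^ n))
      (x * D + (b - a) * Fx) := S1.add (hS.mul_left (b - a))
  have T : HasSum (fun (n : ℕ) => ((n : ℂ) * cc a b n * x ^ n + (b - a) * (cc a b n * x ^ n))
      - (b - a) * (cc (a - 1) b n * x ^ n))
      ((x * D + (b - a) * Fx) - (b - a) * F'x) := A.sub (hS'.mul_left (b - a))
  have Tsh := (hasSum_nat_add_iff' 1).2 T
  have heq2 : ∀ n : ℕ, (((n + 1 : ℕ) : ℂ) * cc a b (n + 1) * x ^ (n + 1)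
      + (b - a) * (cc a b (n + 1) * x ^ (n + 1)))
      - (b - a) * (cc (a - 1) b (n + 1) * x ^ (n + 1)) = x * (cc a b n * x ^ n) := by
    intro n
    push_cast
    linear_combination x ^ (n + 1) * key a b hb n
  simp only [heq2] at Tsh
  have B := hS.mul_left x
  have huniq := B.unique Tsh
  rw [Finset.sum_range_one] at huniq
  norm_num [cc_zero] at huniq
  linear_combination -huniq
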